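/- arXiv:1304.0094 — 2 statements merged into one kernel-verified Lean document; each statement's English description precedes it below -/
import Mathlib

section
/- Let γ: ℙ₁ × ℙ₂ → ℙ̄ be a regular embedding, let g ∈ 𝒢₁, and let P₁*, P₂* be distinct points of 𝒫₂; set g_i := (g × {P_i*})γ for i = 1, 2 (these are lines of ℙ̄). Then the mapping f: g₁ → g₂ determined by (P, P₁*)γ f := (P, P₂*)γ for every P ∈ g is a projectivity. -/
open Set

namespace Segre

variable {P Q : Type*}

/-- Two points are collinear w.r.t. a line set `L` if some line contains both. -/
def Collin (L : Set (Set P)) (x y : P) : Prop := ∃ g ∈ L, x ∈ g ∧ y ∈ g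

/-- The union of all lines of `L` through both `x` and `y`; for distinct collinear
points of a semilinear space this is the unique line `xy`. -/
def lineThru (L : Set (Set P)) (x y : P) : Set P := ⋃ g ∈ {g ∈ L | x ∈ g ∧ y ∈ g}, g

/-- The join `M₁ ∨ M₂` of two point sets in a (semi)linear space with line set `L`. -/
def sJoin (L : Set (Set P)) (M₁ M₂ : Set P) : Set P :=
  M₁ ∪ M₂ ∪
    ⋃ (x ∈ M₁) (y ∈ M₂) (_ : x ≠ y ∧ Collin L x y), lineThru L x y

/-- The (possibly empty) image point set `Xχ` of a single point under a partial map. -/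
def ptImg (χ : P → Option Q) (X : P) : Set Q := {y | χ X = some y}

/-- The image `Mχ` of a point set under a partial map. -/
def mapSet (χ : P → Option Q) (M : Set P) : Set Q := ⋃ X ∈ M, ptImg χ X

/-- Axioms (L1) and (L2) for a linear map from the semilinear space with point set `P`
and line set `L` into the projective space with point set `Q` and line set `L'`.
Points in the exceptional set are modelled by the value `none`. -/
def IsLinMap (L : Set (Set P)) (L' : Set (Set Q)) (χ : P → Option Q) : Prop :=
  (∀ X Y : P, Collin L X Y →
      mapSet χ (sJoin L {X} {Y}) = sJoin L' (ptImg χ X) (ptImg χ Y)) ∧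
  (∀ X Y : P, Collin L X Y → X ≠ Y → ptImg χ X = ptImg χ Y →
      ∃ Z ∈ lineThru L X Y, χ Z = none)

/-- A linear map is global if its domain is everything. -/
def IsGlobal (χ : P → Option Q) : Prop := ∀ X, χ X ≠ none

/-- The lines of the product of two semilinear spaces with line sets `L₁`, `L₂`. -/
def prodLines (L₁ : Set (Set P)) (L₂ : Set (Set Q)) : Set (Set (P × Q)) :=
  {s | (∃ X₁ : P, ∃ g₂ ∈ L₂, s = {X₁} ×ˢ g₂) ∨ ∃ g₁ ∈ L₁, ∃ X₂ : Q, s = g₁ ×ˢ {X₂}}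

/-- The lines of the product of two lines `ℓ₁`, `ℓ₂` (viewed as semilinear spaces). -/
def lineProdLines (ℓ₁ : Set P) (ℓ₂ : Set Q) : Set (Set (P × Q)) :=
  {s | (∃ X ∈ ℓ₁, s = {X} ×ˢ ℓ₂) ∨ ∃ Y ∈ ℓ₂, s = ℓ₁ ×ˢ {Y}}

/-- A collineation of a projective (or semilinear) space with line set `L`:
a bijection such that it and its inverse map lines onto lines. -/
def IsCollineation (L : Set (Set P)) (α : P → P) : Prop :=
  Function.Bijective α ∧ ∀ g : Set P, g ∈ L ↔ α '' g ∈ L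

section Projective

variable {K V : Type*} [Field K] [AddCommGroup V] [Module K V]

/-- The point set of the projective line through two (distinct) points of a
projective space `ℙ K V`. -/
def projLineThrough (x y : Projectivization K V) : Set (Projectivization K V) :=
  {z | z.submodule ≤ x.submodule ⊔ y.submodule}

/-- The lines of the projective space `ℙ K V`. -/
def projLines (K V : Type*) [Field K] [AddCommGroup V] [Module K V] :
    Set (Set (Projectivization K V)) :=
  {g | ∃ x y : Projectivization K V, x ≠ y ∧ g = projLineThrough x y}

/-- The linear span of (representatives of) a set of projective points; its projective
space is the projective closure of the set, whose projective dimension is the vector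
rank of this span minus one. -/
def spanOf (M : Set (Projectivization K V)) : Submodule K V := ⨆ x ∈ M, x.submodule

/-- `E` is the point set of a plane (projective dimension 2). -/
def IsPlane (E : Set (Projectivization K V)) : Prop :=
  ∃ W : Submodule K V, Module.finrank K ↥W = 3 ∧ E = {x | x.submodule ≤ W}

/-- The family of points `A` is a projective basis of the subspace of `ℙ K V`
corresponding to the submodule `W`: the representatives are linearly independent and
span `W`. -/
def IsProjBasisOf {ι : Type*} (A : ι → Projectivization K V) (W : Submodule K V) : Prop :=
  iSupIndep (fun i => (A i).submodule) ∧ (⨆ i, (A i).submodule) = W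

end Projective

section PG

variable (F : Type*) [Field F]

/-- The point set of `PG(k, F)`. -/
abbrev PGPt (k : ℕ) := Projectivization F (Fin (k + 1) → F)

/-- The line set of `PG(k, F)`. -/
abbrev PGLines (k : ℕ) := projLines F (Fin (k + 1) → F)

variable (n m : ℕ)

/-- A regular embedding `γ : ℙ₁ × ℙ₂ → ℙ̄`, where `ℙ₁ = PG(n,F)`, `ℙ₂ = PG(m,F)` and
`ℙ̄ = PG(nm+n+m, F)`: a global injective linear map of the product such that the
projective closure of the image has (projective) dimension `nm+n+m`. -/
def IsRegularEmbedding (γ : PGPt F n × PGPt F m → PGPt F (n * m + n + m)) : Prop :=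
  IsLinMap (prodLines (PGLines F n) (PGLines F m)) (PGLines F (n * m + n + m))
      (fun p => some (γ p)) ∧
  Function.Injective γ ∧
  Module.finrank F ↥(spanOf (Set.range γ)) = n * m + n + m + 1

variable {K W : Type*} [Field K] [AddCommGroup W] [Module K W]

/-- Condition (i) on `χ`, w.r.t. the basis `B` of `ℙ₂` and the plane `E ⊆ 𝒫₁`:
for every `i = 1, …, m` the restriction of `χ` to `E × {B 0, B i}` is global and
of rank greater than `2` (i.e. the vector rank of the span of its image exceeds `3`). -/
def CondI (χ : PGPt F n × PGPt F m → Option (Projectivization K W))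
    (B : Fin (m + 1) → PGPt F m) (E : Set (PGPt F n)) : Prop :=
  IsProjBasisOf B (⊤ : Submodule F (Fin (m + 1) → F)) ∧ IsPlane E ∧
  ∀ i : Fin (m + 1), i ≠ 0 →
    (∀ p ∈ E ×ˢ ({B 0, B i} : Set (PGPt F m)), χ p ≠ none) ∧
    3 < Module.rank K ↥(spanOf (mapSet χ (E ×ˢ ({B 0, B i} : Set (PGPt F m)))))

/-- Condition (ii) on `χ`, w.r.t. the point `A ∈ 𝒫₁`: the image `({A} × 𝒫₂)χ` has
projective dimension `m` (i.e. the vector rank of the span of the image is `m + 1`). -/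
def CondII (χ : PGPt F n × PGPt F m → Option (Projectivization K W))
    (A : PGPt F n) : Prop :=
  Module.rank K ↥(spanOf (mapSet χ (({A} : Set (PGPt F n)) ×ˢ (univ : Set (PGPt F m)))))
    = (m : Cardinal) + 1

/-- `ℓ₂` is a special line for the data `χ, γ, φ, α'`: it is a line of `ℙ₂` such that
(a) `({X} × ℓ₂)γφ = ({X} × ℓ₂)αχ` for every `X ∈ 𝒫₁`, and (b) the rank of `αχ`
restricted to `𝒫₁ × ℓ₂` is greater than `1` (vector rank of the span `> 2`). -/
def SpecialLine (χ : PGPt F n × PGPt F m → Option (Projectivization K W))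
    (γ : PGPt F n × PGPt F m → PGPt F (n * m + n + m))
    (φ : PGPt F (n * m + n + m) → Option (Projectivization K W))
    (α' : PGPt F m → PGPt F m) (ℓ₂ : Set (PGPt F m)) : Prop :=
  ℓ₂ ∈ PGLines F m ∧
  (∀ X : PGPt F n,
    mapSet (fun p => φ (γ p)) (({X} : Set (PGPt F n)) ×ˢ ℓ₂) =
      mapSet (fun p : PGPt F n × PGPt F m => χ (p.1, α' p.2))
        (({X} : Set (PGPt F n)) ×ˢ ℓ₂)) ∧
  2 < Module.rank K ↥(spanOf (mapSet (fun p : PGPt F n × PGPt F m => χ (p.1, α' p.2))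
        ((univ : Set (PGPt F n)) ×ˢ ℓ₂)))

end PG

end Segre

/-!
Write `g = XY` and, for `R ∈ 𝒫₂`, let `S_R = (X,R)γ ⊕ (Y,R)γ`. By (L1) and injectivity `γ` maps
`g × {R}` onto the line of `S_R` and `{P} × P₁P₂` onto the line through `(P,P₁)γ` and `(P,P₂)γ`.
For a third point `Q` of `P₁P₂` the spaces `S_{P₁}, S_{P₂}, S_Q` therefore meet pairwise
trivially and `S_Q ≤ S_{P₁} ⊕ S_{P₂}`, so `S_Q` is the graph of a linear isomorphism
`T : S_{P₁} → S_{P₂}`. As `(P,Q)γ` lies on the line through `(P,P₁)γ` and `(P,P₂)γ`, `T` maps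
`(P,P₁)γ` to `(P,P₂)γ`.
-/

open Module
open scoped LinearAlgebra.Projectivization

namespace Projectivization

variable {K V : Type*} [Field K] [AddCommGroup V] [Module K V]

theorem rep_mem_submodule (x : ℙ K V) : x.rep ∈ x.submodule := by
  rw [x.submodule_eq]
  exact Submodule.mem_span_singleton_self _

theorem submodule_eq_span_singleton_of_mem {x : ℙ K V} {v : V} (hv : v ∈ x.submodule)
    (hv0 : v ≠ 0) : x.submodule = K ∙ v :=
  (Submodule.eq_of_le_of_finrank_eq ((Submodule.span_singleton_le_iff_mem _ _).mpr hv)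
    (by rw [finrank_span_singleton hv0, x.finrank_submodule])).symm

end Projectivization

namespace Segre

section Semilinear

variable {P Q : Type*}

theorem ptImg_some (f : P → Q) (x : P) : ptImg (fun p => some (f p)) x = {f x} := by
  ext
  simp [ptImg, eq_comm]

theorem mapSet_some (f : P → Q) (M : Set P) : mapSet (fun p => some (f p)) M = f '' M := by
  ext
  simp [mapSet, ptImg_some, eq_comm]

theorem sJoin_singleton_eq_of_unique {L : Set (Set P)} {h : Set P} (hh : h ∈ L) {u v : P}
    (hu : u ∈ h) (hv : v ∈ h) (huv : u ≠ v) (huniq : ∀ g ∈ L, u ∈ g → v ∈ g → g = h) :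
    sJoin L {u} {v} = h := by
  have hline : lineThru L u v = h :=
    subset_antisymm (iUnion₂_subset fun g hg => (huniq g hg.1 hg.2.1 hg.2.2).le)
      (subset_biUnion_of_mem (u := id) ⟨hh, hu, hv⟩)
  have hc : Collin L u v := ⟨h, hh, hu, hv⟩
  simp [sJoin, huv, hc, hline, insert_subset_iff, hu, hv]

end Semilinear

section Projective

variable {K V : Type*} [Field K] [AddCommGroup V] [Module K V]

theorem left_mem_projLineThrough (x y : ℙ K V) : x ∈ projLineThrough x y :=
  show x.submodule ≤ _ from le_sup_left

theorem right_mem_projLineThrough (x y : ℙ K V) : y ∈ projLineThrough x y :=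
  show y.submodule ≤ _ from le_sup_right

theorem projLineThrough_mem_projLines {x y : ℙ K V} (h : x ≠ y) :
    projLineThrough x y ∈ projLines K V :=
  ⟨x, y, h, rfl⟩

theorem spanOf_projLineThrough (x y : ℙ K V) :
    spanOf (projLineThrough x y) = x.submodule ⊔ y.submodule :=
  le_antisymm (iSup₂_le fun _ hz => hz)
    (sup_le (le_iSup₂_of_le x (left_mem_projLineThrough x y) le_rfl)
      (le_iSup₂_of_le y (right_mem_projLineThrough x y) le_rfl))

theorem mk_mem_projLineThrough {x y : ℙ K V} {v : V} (hv : v ≠ 0) :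
    Projectivization.mk K v hv ∈ projLineThrough x y ↔ v ∈ x.submodule ⊔ y.submodule := by
  rw [projLineThrough, mem_ofPred, Projectivization.submodule_mk,
    Submodule.span_singleton_le_iff_mem]

theorem finrank_sup_submodule_of_ne {x y : ℙ K V} (h : x ≠ y) :
    finrank K ↥(x.submodule ⊔ y.submodule) = 2 := by
  rw [x.submodule_eq, y.submodule_eq, ← Submodule.span_insert,
    ← Matrix.range_cons_cons_empty _ _ ![],
    finrank_span_eq_card (Projectivization.linearIndependent_pair_iff_ne.mpr h), Fintype.card_fin]

theorem eq_projLineThrough_of_mem {s : Set (ℙ K V)} (hs : s ∈ projLines K V) {u v : ℙ K V}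
    (hu : u ∈ s) (hv : v ∈ s) (huv : u ≠ v) : s = projLineThrough u v := by
  obtain ⟨x, y, hxy, rfl⟩ := hs
  rw [projLineThrough, projLineThrough, Projectivization.line_unique huv _ _
    (finrank_sup_submodule_of_ne hxy) (finrank_sup_submodule_of_ne huv)]
  all_goals simp only [Submodule.mem_projectivization_iff_submodule_le]
  exacts [hu, hv, le_sup_left, le_sup_right]

theorem sJoin_projLines {x y : ℙ K V} (h : x ≠ y) :
    sJoin (projLines K V) {x} {y} = projLineThrough x y :=
  sJoin_singleton_eq_of_unique (projLineThrough_mem_projLines h) (left_mem_projLineThrough x y)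
    (right_mem_projLineThrough x y) h fun _ hg hx hy => eq_projLineThrough_of_mem hg hx hy h

theorem exists_mem_projLineThrough_ne {x y : ℙ K V} (h : x ≠ y) :
    ∃ z ∈ projLineThrough x y, z ≠ x ∧ z ≠ y := by
  have hind := LinearIndependent.pair_iff.mp
    (Projectivization.linearIndependent_pair_iff_ne.mpr h)
  have hsum : x.rep + y.rep ≠ 0 := fun h0 => one_ne_zero (hind 1 1 (by simpa using h0)).1
  refine ⟨Projectivization.mk K _ hsum, (mk_mem_projLineThrough hsum).mpr
    (Submodule.add_mem_sup x.rep_mem_submodule y.rep_mem_submodule), fun hx => ?_, fun hy => ?_⟩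
  · obtain ⟨a, ha⟩ := (Projectivization.mk_eq_mk_iff' K _ _ hsum x.rep_nonzero).mp
      (hx.trans x.mk_rep.symm)
    exact one_ne_zero (hind (1 - a) 1 (by simp only [sub_smul, one_smul, ha]; abel)).2
  · obtain ⟨a, ha⟩ := (Projectivization.mk_eq_mk_iff' K _ _ hsum y.rep_nonzero).mp
      (hy.trans y.mk_rep.symm)
    exact one_ne_zero (hind 1 (1 - a) (by simp only [sub_smul, one_smul, ha]; abel)).1

theorem disjoint_sup_submodule_of_disjoint {x y x' y' : ℙ K V}
    (h : Disjoint (projLineThrough x y) (projLineThrough x' y')) :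
    Disjoint (x.submodule ⊔ y.submodule) (x'.submodule ⊔ y'.submodule) := by
  refine Submodule.disjoint_def.mpr fun w hw hw' => by_contra fun hw0 => ?_
  exact Set.disjoint_left.mp h ((mk_mem_projLineThrough hw0).mpr hw)
    ((mk_mem_projLineThrough hw0).mpr hw')

end Projective

section LinearAlgebra

variable {K V : Type*} [Field K] [AddCommGroup V] [Module K V]

theorem exists_linearMap_apply_eq_of_le_sup [FiniteDimensional K V] {A B C : Submodule K V}
    (hAB : Disjoint A B) (hCB : Disjoint C B) (hC : C ≤ A ⊔ B)
    (hrank : finrank K C = finrank K A) :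
    ∃ T : V →ₗ[K] V, ∀ a ∈ A, ∀ b ∈ B, a + b ∈ C → T a = b := by
  have hCB_eq : C ⊔ B = A ⊔ B := by
    refine Submodule.eq_of_le_of_finrank_eq (sup_le hC le_sup_right) ?_
    have hC' := Submodule.finrank_sup_add_finrank_inf_eq C B
    have hA' := Submodule.finrank_sup_add_finrank_inf_eq A B
    rw [hCB.eq_bot, hAB.eq_bot, finrank_bot] at *
    omega
  obtain ⟨W, hW⟩ := Submodule.exists_isCompl (A ⊔ B)
  have hCW : IsCompl C (B ⊔ W) := hCB.isCompl_sup_right_of_isCompl_sup_left (hCB_eq ▸ hW)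
  -- `C` and `A` are complements of `B` in `A ⊔ B`: projecting `a` onto `C` along `B ⊔ W`
  -- gives the unique `a + b ∈ C`.
  refine ⟨C.projection (B ⊔ W) hCW - LinearMap.id, fun a _ b hb hab => ?_⟩
  have hproj : C.projection (B ⊔ W) hCW a = a + b := by
    rw [show a = (a + b) - b by abel, map_sub, Submodule.projection_apply_of_mem_left _ hab,
      Submodule.projection_apply_of_mem_right _ (Submodule.mem_sup_left hb), sub_zero]
    abel
  simp [hproj]

theorem map_submodule_eq_of_mem_projLineThrough {A B C : Submodule K V} {T : V →ₗ[K] V}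
    (hT : ∀ a ∈ A, ∀ b ∈ B, a + b ∈ C → T a = b) (hCA : Disjoint C A) (hCB : Disjoint C B)
    {x y z : ℙ K V} (hx : x.submodule ≤ A) (hy : y.submodule ≤ B) (hz : z.submodule ≤ C)
    (hzxy : z ∈ projLineThrough x y) : x.submodule.map T = y.submodule := by
  obtain ⟨a, ha, b, hb, hab⟩ := Submodule.mem_sup.mp (hzxy z.rep_mem_submodule)
  have hC : a + b ∈ C := hab ▸ hz z.rep_mem_submodule
  have ha0 : a ≠ 0 := by
    rintro rfl
    rw [zero_add] at hab hC
    exact z.rep_nonzero (hab ▸ Submodule.disjoint_def.mp hCB b hC (hy hb))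
  have hb0 : b ≠ 0 := by
    rintro rfl
    rw [add_zero] at hab hC
    exact z.rep_nonzero (hab ▸ Submodule.disjoint_def.mp hCA a hC (hx ha))
  rw [Projectivization.submodule_eq_span_singleton_of_mem ha ha0,
    Projectivization.submodule_eq_span_singleton_of_mem hb hb0, Submodule.map_span,
    image_singleton, hT a (hx ha) b (hy hb) hC]

end LinearAlgebra

section SegreProduct

variable {K V₁ V₂ W : Type*} [Field K] [AddCommGroup V₁] [Module K V₁] [AddCommGroup V₂]
  [Module K V₂] [AddCommGroup W] [Module K W] {γ : ℙ K V₁ × ℙ K V₂ → ℙ K W}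

local notation "L₁₂" => prodLines (projLines K V₁) (projLines K V₂)

theorem eq_of_mem_prodLines {h h' : Set (ℙ K V₁ × ℙ K V₂)} (hh : h ∈ L₁₂) (hh' : h' ∈ L₁₂)
    {u v : ℙ K V₁ × ℙ K V₂} (hu : u ∈ h) (hv : v ∈ h) (hu' : u ∈ h') (hv' : v ∈ h')
    (huv : u ≠ v) : h = h' := by
  rcases hh with ⟨X, g, hg, rfl⟩ | ⟨g, hg, X, rfl⟩ <;>
    rcases hh' with ⟨X', g', hg', rfl⟩ | ⟨g', hg', X', rfl⟩ <;>
    simp only [mem_prod, mem_singleton_iff] at hu hv hu' hv'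
  · have h2 : u.2 ≠ v.2 := fun h2 => huv (Prod.ext (hu.1.trans hv.1.symm) h2)
    rw [eq_projLineThrough_of_mem hg hu.2 hv.2 h2, eq_projLineThrough_of_mem hg' hu'.2 hv'.2 h2,
      ← hu.1, ← hu'.1]
  · exact absurd (Prod.ext (hu.1.trans hv.1.symm) (hu'.2.trans hv'.2.symm)) huv
  · exact absurd (Prod.ext (hu'.1.trans hv'.1.symm) (hu.2.trans hv.2.symm)) huv
  · have h1 : u.1 ≠ v.1 := fun h1 => huv (Prod.ext h1 (hu.2.trans hv.2.symm))
    rw [eq_projLineThrough_of_mem hg hu.1 hv.1 h1, eq_projLineThrough_of_mem hg' hu'.1 hv'.1 h1,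
      ← hu.2, ← hu'.2]

theorem sJoin_prodLines {h : Set (ℙ K V₁ × ℙ K V₂)} (hh : h ∈ L₁₂) {u v : ℙ K V₁ × ℙ K V₂}
    (hu : u ∈ h) (hv : v ∈ h) (huv : u ≠ v) : sJoin L₁₂ {u} {v} = h :=
  sJoin_singleton_eq_of_unique hh hu hv huv fun _ hg hug hvg =>
    eq_of_mem_prodLines hg hh hug hvg hu hv huv

theorem image_eq_projLineThrough_of_mem_prodLines
    (hγ : IsLinMap L₁₂ (projLines K W) (fun p => some (γ p)))
    (hinj : Function.Injective γ) {h : Set (ℙ K V₁ × ℙ K V₂)} (hh : h ∈ L₁₂)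
    {u v : ℙ K V₁ × ℙ K V₂} (hu : u ∈ h) (hv : v ∈ h) (huv : u ≠ v) :
    γ '' h = projLineThrough (γ u) (γ v) := by
  have hjoin := hγ.1 u v ⟨h, hh, hu, hv⟩
  rwa [sJoin_prodLines hh hu hv huv, mapSet_some, ptImg_some, ptImg_some,
    sJoin_projLines (hinj.ne huv)] at hjoin

theorem image_projLineThrough_prod_singleton
    (hγ : IsLinMap L₁₂ (projLines K W) (fun p => some (γ p)))
    (hinj : Function.Injective γ) {X Y : ℙ K V₁} (hXY : X ≠ Y) (R : ℙ K V₂) :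
    γ '' (projLineThrough X Y ×ˢ {R}) = projLineThrough (γ (X, R)) (γ (Y, R)) :=
  image_eq_projLineThrough_of_mem_prodLines hγ hinj
    (Or.inr ⟨_, projLineThrough_mem_projLines hXY, R, rfl⟩)
    ⟨left_mem_projLineThrough X Y, rfl⟩ ⟨right_mem_projLineThrough X Y, rfl⟩ (by simpa using hXY)

theorem image_singleton_prod_projLineThrough
    (hγ : IsLinMap L₁₂ (projLines K W) (fun p => some (γ p)))
    (hinj : Function.Injective γ) (X : ℙ K V₁) {R S : ℙ K V₂} (hRS : R ≠ S) :
    γ '' ({X} ×ˢ projLineThrough R S) = projLineThrough (γ (X, R)) (γ (X, S)) :=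
  image_eq_projLineThrough_of_mem_prodLines hγ hinj
    (Or.inl ⟨X, _, projLineThrough_mem_projLines hRS, rfl⟩)
    ⟨rfl, left_mem_projLineThrough R S⟩ ⟨rfl, right_mem_projLineThrough R S⟩ (by simpa using hRS)

theorem disjoint_sup_submodule_apply_of_ne
    (hγ : IsLinMap L₁₂ (projLines K W) (fun p => some (γ p)))
    (hinj : Function.Injective γ) {X Y : ℙ K V₁} (hXY : X ≠ Y) {R S : ℙ K V₂} (hRS : R ≠ S) :
    Disjoint ((γ (X, R)).submodule ⊔ (γ (Y, R)).submodule)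
      ((γ (X, S)).submodule ⊔ (γ (Y, S)).submodule) := by
  apply disjoint_sup_submodule_of_disjoint
  rw [← image_projLineThrough_prod_singleton hγ hinj hXY,
    ← image_projLineThrough_prod_singleton hγ hinj hXY, disjoint_image_iff hinj]
  exact disjoint_prod.mpr (Or.inr (disjoint_singleton.mpr hRS))

theorem exists_linearMap_map_submodule_apply [FiniteDimensional K W]
    (hγ : IsLinMap L₁₂ (projLines K W) (fun p => some (γ p)))
    (hinj : Function.Injective γ) {X Y : ℙ K V₁} (hXY : X ≠ Y) {R S : ℙ K V₂} (hRS : R ≠ S) :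
    ∃ T : W →ₗ[K] W, ∀ P ∈ projLineThrough X Y,
      (γ (P, R)).submodule.map T = (γ (P, S)).submodule := by
  obtain ⟨Q, hQ, hQR, hQS⟩ := exists_mem_projLineThrough_ne hRS
  let S' (R : ℙ K V₂) : Submodule K W := (γ (X, R)).submodule ⊔ (γ (Y, R)).submodule
  have hdisj {R S : ℙ K V₂} (hRS : R ≠ S) : Disjoint (S' R) (S' S) :=
    disjoint_sup_submodule_apply_of_ne hγ hinj hXY hRS
  have horiz (R : ℙ K V₂) {P : ℙ K V₁} (hP : P ∈ projLineThrough X Y) :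
      γ (P, R) ∈ projLineThrough (γ (X, R)) (γ (Y, R)) :=
    image_projLineThrough_prod_singleton hγ hinj hXY R ▸ mem_image_of_mem γ ⟨hP, rfl⟩
  have vert (P : ℙ K V₁) : γ (P, Q) ∈ projLineThrough (γ (P, R)) (γ (P, S)) :=
    image_singleton_prod_projLineThrough hγ hinj P hRS ▸ mem_image_of_mem γ ⟨rfl, hQ⟩
  have hQ_le : S' Q ≤ S' R ⊔ S' S :=
    sup_le ((vert X).trans (sup_le_sup le_sup_left le_sup_left))
      ((vert Y).trans (sup_le_sup le_sup_right le_sup_right))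
  have hrank (R : ℙ K V₂) : finrank K (S' R) = 2 :=
    finrank_sup_submodule_of_ne (hinj.ne (by simpa using hXY))
  obtain ⟨T, hT⟩ := exists_linearMap_apply_eq_of_le_sup (hdisj hRS) (hdisj hQS) hQ_le
    (by rw [hrank, hrank])
  exact ⟨T, fun P hP => map_submodule_eq_of_mem_projLineThrough hT (hdisj hQR) (hdisj hQS)
    (horiz R hP) (horiz S hP) (horiz Q hP) (vert P)⟩

end SegreProduct

end Segre

open Segre Set in
theorem statement_6_general (F : Type*) [Field F] (n m : ℕ)
    (γ : PGPt F n × PGPt F m → PGPt F (n * m + n + m))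
    (hγ : IsRegularEmbedding F n m γ)
    (g : Set (PGPt F n)) (hg : g ∈ PGLines F n)
    (P₁ P₂ : PGPt F m) (hP : P₁ ≠ P₂) :
    γ '' (g ×ˢ ({P₁} : Set (PGPt F m))) ∈ PGLines F (n * m + n + m) ∧
    γ '' (g ×ˢ ({P₂} : Set (PGPt F m))) ∈ PGLines F (n * m + n + m) ∧
    ∃ T : (Fin (n * m + n + m + 1) → F) →ₗ[F] (Fin (n * m + n + m + 1) → F),
      Submodule.map T (spanOf (γ '' (g ×ˢ ({P₁} : Set (PGPt F m)))))
        = spanOf (γ '' (g ×ˢ ({P₂} : Set (PGPt F m)))) ∧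
      ∀ P ∈ g, Submodule.map T ((γ (P, P₁)).submodule) = (γ (P, P₂)).submodule := by
  obtain ⟨hlin, hinj, -⟩ := hγ
  obtain ⟨X, Y, hXY, rfl⟩ := hg
  have hne (R : PGPt F m) : γ (X, R) ≠ γ (Y, R) := hinj.ne (by simpa using hXY)
  obtain ⟨T, hT⟩ := exists_linearMap_map_submodule_apply hlin hinj hXY hP
  rw [image_projLineThrough_prod_singleton hlin hinj hXY,
    image_projLineThrough_prod_singleton hlin hinj hXY]
  refine ⟨projLineThrough_mem_projLines (hne P₁), projLineThrough_mem_projLines (hne P₂), T,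
    ?_, hT⟩
  rw [spanOf_projLineThrough, spanOf_projLineThrough, Submodule.map_sup,
    hT X (left_mem_projLineThrough X Y), hT Y (right_mem_projLineThrough X Y)]

open Segre Set in
/-- Proposition `proiett`: the map `(P, P₁*)γ ↦ (P, P₂*)γ` between
the lines `g₁ = (g × {P₁*})γ` and `g₂ = (g × {P₂*})γ` is a projectivity (it is
induced by a linear map carrying the 2-dimensional subspace of `g₁` onto that
of `g₂`). -/
theorem statement_6 (F : Type*) [Field F] (n m : ℕ) (hn : 2 ≤ n) (hm : 1 ≤ m)
    (γ : PGPt F n × PGPt F m → PGPt F (n * m + n + m))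
    (hγ : IsRegularEmbedding F n m γ)
    (g : Set (PGPt F n)) (hg : g ∈ PGLines F n)
    (P₁ P₂ : PGPt F m) (hP : P₁ ≠ P₂) :
    γ '' (g ×ˢ ({P₁} : Set (PGPt F m))) ∈ PGLines F (n * m + n + m) ∧
    γ '' (g ×ˢ ({P₂} : Set (PGPt F m))) ∈ PGLines F (n * m + n + m) ∧
    ∃ T : (Fin (n * m + n + m + 1) → F) →ₗ[F] (Fin (n * m + n + m + 1) → F),
      Submodule.map T (spanOf (γ '' (g ×ˢ ({P₁} : Set (PGPt F m)))))
        = spanOf (γ '' (g ×ˢ ({P₂} : Set (PGPt F m)))) ∧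
      ∀ P ∈ g, Submodule.map T ((γ (P, P₁)).submodule) = (γ (P, P₂)).submodule :=
  statement_6_general F n m γ hγ g hg P₁ P₂ hP
end

section
/- Let χ: ℙ₁ × ℙ₂ → ℙ' be a linear map, g ∈ 𝒢₁, g' ∈ 𝒢₂, and let P₀*, P₁*, P₂* be three distinct points on g'; set h_i := (g × {P_i*})χ for i = 0, 1, 2. Then for every permutation (i, j, k) of (0, 1, 2) it holds h_i ⊆ h_j ∨ h_k. -/
open Set

namespace Segre

variable {P Q : Type*}

lemma sJoin_mono {L : Set (Set Q)} {M₁ M₂ N₁ N₂ : Set Q} (h₁ : M₁ ⊆ N₁) (h₂ : M₂ ⊆ N₂) :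
    sJoin L M₁ M₂ ⊆ sJoin L N₁ N₂ := by
  intro z hz
  rcases hz with hz | hz
  · rcases hz with hz | hz
    · exact Or.inl (Or.inl (h₁ hz))
    · exact Or.inl (Or.inr (h₂ hz))
  · simp only [mem_iUnion] at hz ⊢
    obtain ⟨x, hx, y, hy, hne, hzl⟩ := hz
    exact Or.inr (by
      simp only [mem_iUnion]
      exact ⟨x, h₁ hx, y, h₂ hy, hne, hzl⟩)

lemma lineThru_comm (L : Set (Set Q)) (x y : Q) : lineThru L x y = lineThru L y x := by
  unfold lineThru
  ext z
  rw [mem_iUnion₂, mem_iUnion₂]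
  constructor <;>
    (rintro ⟨s, ⟨hsL, hxs, hys⟩, hzs⟩; exact ⟨s, ⟨hsL, hys, hxs⟩, hzs⟩)

lemma sJoin_comm (L : Set (Set Q)) (M₁ M₂ : Set Q) : sJoin L M₁ M₂ = sJoin L M₂ M₁ := by
  unfold sJoin
  rw [union_comm M₁ M₂]
  congr 1
  ext z
  simp only [mem_iUnion]
  constructor
  · rintro ⟨x, hx, y, hy, ⟨hne, g, hg, hxg, hyg⟩, hz⟩
    exact ⟨y, hy, x, hx, ⟨hne.symm, g, hg, hyg, hxg⟩, (lineThru_comm L x y) ▸ hz⟩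
  · rintro ⟨x, hx, y, hy, ⟨hne, g, hg, hxg, hyg⟩, hz⟩
    exact ⟨y, hy, x, hx, ⟨hne.symm, g, hg, hyg, hxg⟩, (lineThru_comm L y x) ▸ hz⟩

lemma ptImg_subset_mapSet (χ : P → Option Q) {M : Set P} {X : P} (hX : X ∈ M) :
    ptImg χ X ⊆ mapSet χ M := by
  intro z hz
  exact mem_iUnion₂.mpr ⟨X, hX, hz⟩

end Segre

open Segre Set in
theorem statement7_key (F : Type*) [Field F] (n m : ℕ)
    (K W : Type*) [Field K] [AddCommGroup W] [Module K W]
    (χ : PGPt F n × PGPt F m → Option (Projectivization K W))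
    (hχ : IsLinMap (prodLines (PGLines F n) (PGLines F m)) (projLines K W) χ)
    (g : Set (PGPt F n))
    (g' : Set (PGPt F m)) (hg' : g' ∈ PGLines F m)
    (P₀ P₁ P₂ : PGPt F m) (h0 : P₀ ∈ g') (h1 : P₁ ∈ g') (h2 : P₂ ∈ g')
    (d12 : P₁ ≠ P₂) :
    mapSet χ (g ×ˢ ({P₀} : Set (PGPt F m))) ⊆
      sJoin (projLines K W) (mapSet χ (g ×ˢ ({P₁} : Set (PGPt F m))))
        (mapSet χ (g ×ˢ ({P₂} : Set (PGPt F m)))) := by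
  intro z hz
  rw [mapSet, mem_iUnion₂] at hz
  obtain ⟨⟨x, p⟩, hxp, hzp⟩ := hz
  rw [mem_prod, mem_singleton_iff] at hxp
  obtain ⟨hx, hp⟩ := hxp
  rw [show ((x, p) : PGPt F n × PGPt F m) = (x, P₀) from Prod.ext rfl hp] at hzp
  set L := prodLines (PGLines F n) (PGLines F m)
  have hline : ({x} : Set (PGPt F n)) ×ˢ g' ∈ L := Or.inl ⟨x, g', hg', rfl⟩
  have hcol : Collin L (x, P₁) (x, P₂) :=
    ⟨({x} : Set (PGPt F n)) ×ˢ g', hline, ⟨rfl, h1⟩, ⟨rfl, h2⟩⟩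
  have hne : ((x, P₁) : PGPt F n × PGPt F m) ≠ (x, P₂) := by
    simp [d12]
  have hmem : ((x, P₀) : PGPt F n × PGPt F m) ∈
      sJoin L {((x, P₁) : PGPt F n × PGPt F m)} {((x, P₂) : PGPt F n × PGPt F m)} := by
    refine Or.inr ?_
    rw [mem_iUnion₂]
    refine ⟨(x, P₁), rfl, ?_⟩
    rw [mem_iUnion₂]
    refine ⟨(x, P₂), rfl, ?_⟩
    rw [mem_iUnion]
    refine ⟨⟨hne, hcol⟩, ?_⟩
    rw [lineThru, mem_iUnion₂]
    exact ⟨({x} : Set (PGPt F n)) ×ˢ g', ⟨hline, ⟨rfl, h1⟩, ⟨rfl, h2⟩⟩, ⟨rfl, h0⟩⟩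
  have hz' : z ∈ mapSet χ (sJoin L {((x, P₁) : PGPt F n × PGPt F m)} {(x, P₂)}) :=
    ptImg_subset_mapSet χ hmem hzp
  rw [hχ.1 _ _ hcol] at hz'
  refine sJoin_mono ?_ ?_ hz'
  · exact ptImg_subset_mapSet χ (by exact ⟨hx, rfl⟩)
  · exact ptImg_subset_mapSet χ (by exact ⟨hx, rfl⟩)

open Segre Set in
/-- Proposition `generano`: for three distinct points `P₀, P₁, P₂` on a
line `g'` of `ℙ₂` and a line `g` of `ℙ₁`, the sets `h_i = (g × {P_i})χ` satisfy
`h_i ⊆ h_j ∨ h_k` for every permutation `(i, j, k)` of `(0, 1, 2)`. -/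
theorem statement_7 (F : Type*) [Field F] (n m : ℕ) (hn : 2 ≤ n) (hm : 1 ≤ m)
    (K W : Type*) [Field K] [AddCommGroup W] [Module K W]
    (χ : PGPt F n × PGPt F m → Option (Projectivization K W))
    (hχ : IsLinMap (prodLines (PGLines F n) (PGLines F m)) (projLines K W) χ)
    (g : Set (PGPt F n)) (hg : g ∈ PGLines F n)
    (g' : Set (PGPt F m)) (hg' : g' ∈ PGLines F m)
    (P₀ P₁ P₂ : PGPt F m) (h0 : P₀ ∈ g') (h1 : P₁ ∈ g') (h2 : P₂ ∈ g')
    (d01 : P₀ ≠ P₁) (d02 : P₀ ≠ P₂) (d12 : P₁ ≠ P₂) :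
    mapSet χ (g ×ˢ ({P₀} : Set (PGPt F m))) ⊆
      sJoin (projLines K W) (mapSet χ (g ×ˢ ({P₁} : Set (PGPt F m))))
        (mapSet χ (g ×ˢ ({P₂} : Set (PGPt F m)))) ∧
    mapSet χ (g ×ˢ ({P₀} : Set (PGPt F m))) ⊆
      sJoin (projLines K W) (mapSet χ (g ×ˢ ({P₂} : Set (PGPt F m))))
        (mapSet χ (g ×ˢ ({P₁} : Set (PGPt F m)))) ∧
    mapSet χ (g ×ˢ ({P₁} : Set (PGPt F m))) ⊆
      sJoin (projLines K W) (mapSet χ (g ×ˢ ({P₀} : Set (PGPt F m))))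
        (mapSet χ (g ×ˢ ({P₂} : Set (PGPt F m)))) ∧
    mapSet χ (g ×ˢ ({P₁} : Set (PGPt F m))) ⊆
      sJoin (projLines K W) (mapSet χ (g ×ˢ ({P₂} : Set (PGPt F m))))
        (mapSet χ (g ×ˢ ({P₀} : Set (PGPt F m)))) ∧
    mapSet χ (g ×ˢ ({P₂} : Set (PGPt F m))) ⊆
      sJoin (projLines K W) (mapSet χ (g ×ˢ ({P₀} : Set (PGPt F m))))
        (mapSet χ (g ×ˢ ({P₁} : Set (PGPt F m)))) ∧
    mapSet χ (g ×ˢ ({P₂} : Set (PGPt F m))) ⊆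
      sJoin (projLines K W) (mapSet χ (g ×ˢ ({P₁} : Set (PGPt F m))))
        (mapSet χ (g ×ˢ ({P₀} : Set (PGPt F m)))) := by
  refine ⟨statement7_key F n m K W χ hχ g g' hg' P₀ P₁ P₂ h0 h1 h2 d12,
    (sJoin_comm _ _ _) ▸ statement7_key F n m K W χ hχ g g' hg' P₀ P₁ P₂ h0 h1 h2 d12,
    statement7_key F n m K W χ hχ g g' hg' P₁ P₀ P₂ h1 h0 h2 d02,
    (sJoin_comm _ _ _) ▸ statement7_key F n m K W χ hχ g g' hg' P₁ P₀ P₂ h1 h0 h2 d02,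
    statement7_key F n m K W χ hχ g g' hg' P₂ P₀ P₁ h2 h0 h1 d01,
    (sJoin_comm _ _ _) ▸ statement7_key F n m K W χ hχ g g' hg' P₂ P₀ P₁ h2 h0 h1 d01⟩
end
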